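/- Let M ⊆ ℤ² and C > 0 be such that R_M(n) ≤ C·n for all n ≥ 1. Suppose K and L' are positive integers such that: (1) for every x ∈ ℤ² with ‖x‖ ≥ L' there exists a nonzero v ∈ ℤ² with ‖v‖ ≤ √(10CK) such that M is v-periodic inside B(x,K); (2) √(10CK) ≤ K; (3) 8·(log K)³ + 3CK/(log K) < K. Let L'' be such that for every x ∈ ℤ² with ‖x‖ ≥ L'' the block M_{x,3K} is recurrent, and let L ≥ 2K + L'' + L'. Then there exist vectors x_1, …, x_k ∈ ℤ² and a set V = {v_1, …, v_k} ⊆ ℤ² such that: (a) for every x ∈ ℤ² with ‖x‖ ≥ L there exists v ∈ V such that M is v-periodic inside B(x,K); (b) ‖v_i‖ ≤ √(10CK) for all i; (c) 0, v_1, …, v_k are pairwise distinct; (d) ‖x_i‖ ≥ L for all i; (e) for all i, M is v_i-periodic inside B(x_i,K) and M is not w-periodic inside B(x_i,K) for any nonzero w ∈ ℤ² with ‖w‖ < ‖v_i‖; (f) for all i and all j < i, M is not v_j-periodic inside B(x_i,K). -/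

import Mathlib

open Classical

noncomputable section

/-- Sup norm of an integer vector. -/
def supNorm {ι : Type} [Fintype ι] (x : ι → ℤ) : ℕ :=
  Finset.univ.sup fun i => (x i).natAbs

/-- The block of size `n` of `M` at `x`. -/
def blockOf {ι : Type} [Fintype ι] (M : Set (ι → ℤ)) (x : ι → ℤ) (n : ℕ) :
    (ι → Fin n) → Prop :=
  fun w => (fun i => x i + (w i : ℤ)) ∈ M

/-- A block is recurrent if it occurs at points of arbitrarily large norm. -/
def IsRecurrentBlock {ι : Type} [Fintype ι] (M : Set (ι → ℤ)) (n : ℕ)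
    (B : (ι → Fin n) → Prop) : Prop :=
  ∀ L : ℕ, ∃ x : ι → ℤ, L ≤ supNorm x ∧ blockOf M x n = B

/-- `R_M(n)`: number of distinct recurrent blocks of size `n`. -/
def recBlockCount {ι : Type} [Fintype ι] (M : Set (ι → ℤ)) (n : ℕ) : ℕ :=
  Set.ncard {B : (ι → Fin n) → Prop | IsRecurrentBlock M n B}

/-- `p_M(n)`: number of distinct blocks of size `n`. -/
def blockCount {ι : Type} [Fintype ι] (M : Set (ι → ℤ)) (n : ℕ) : ℕ :=
  Set.ncard {B : (ι → Fin n) → Prop | ∃ x, blockOf M x n = B}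

/-- Linear subset of `ℤ^ι`. -/
def IsLinearSetZ {ι : Type} [Fintype ι] (S : Set (ι → ℤ)) : Prop :=
  ∃ (x : ι → ℤ) (V : Finset (ι → ℤ)),
    S = {y | ∃ c : (ι → ℤ) → ℕ, y = x + ∑ v ∈ V, (c v : ℤ) • v}

/-- Semilinear = finite union of linear sets. -/
def IsSemilinearSetZ {ι : Type} [Fintype ι] (S : Set (ι → ℤ)) : Prop :=
  ∃ F : Finset (Set (ι → ℤ)), (∀ T ∈ F, IsLinearSetZ T) ∧ S = ⋃ T ∈ F, T

/-- Section `M_{i,c}` of a subset of `ℤ^(d+1)`. -/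
def sectionSet {d : ℕ} (M : Set (Fin (d + 1) → ℤ)) (i : Fin (d + 1)) (c : ℤ) :
    Set (Fin d → ℤ) :=
  {y | i.insertNth c y ∈ M}

/-- Open ball (for the sup norm) of radius `K` centered at `x`. -/
def ball {ι : Type} [Fintype ι] (x : ι → ℤ) (K : ℕ) : Set (ι → ℤ) :=
  {y | supNorm (x - y) < K}

/-- `M` is `v`-periodic inside `X`. -/
def vPeriodicInside {ι : Type} [Fintype ι] (M : Set (ι → ℤ)) (v : ι → ℤ)
    (X : Set (ι → ℤ)) : Prop :=
  ∀ m : ι → ℤ, m ∈ X → m + v ∈ X → (m ∈ M ↔ m + v ∈ M)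

/-- Border of `A` in direction `v`. -/
def border {ι : Type} (A : Set (ι → ℤ)) (v : ι → ℤ) : Set (ι → ℤ) :=
  {x | x ∈ A ∧ x + v ∉ A}

/-- `(d-k)`-dimensional section of `M ⊆ ℤ^d` obtained by fixing the coordinates
in the range of `g` to the corresponding constants `c`. -/
def multiSection {d k : ℕ} (M : Set (Fin d → ℤ)) (g : Fin k → Fin d)
    (c : Fin k → ℤ) : Set ({j : Fin d // ∀ m, g m ≠ j} → ℤ) :=
  {y | (fun j : Fin d =>
    if h : ∃ m, g m = j then c (Classical.choose h)
    else y ⟨j, fun m hm => h ⟨m, hm⟩⟩) ∈ M}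

/-- Repetitivity of a subset of `ℤ^ι`. -/
def Repetitive {ι : Type} [Fintype ι] (M : Set (ι → ℤ)) : Prop :=
  ∀ n : ℕ, 1 ≤ n → ∃ R : ℕ, ∀ x y : ι → ℤ, ∃ z : ι → ℤ,
    supNorm (z - y) ≤ R ∧ blockOf M z n = blockOf M x n

/-- Ideal crystal: `d` linearly independent translation periods. -/
def IsIdealCrystal {d : ℕ} (M : Set (Fin d → ℤ)) : Prop :=
  ∃ p : Fin d → (Fin d → ℤ), LinearIndependent ℤ p ∧
    ∀ i, (fun x => x + p i) '' M = M

/-!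
Greedy selection. Call `x` far if `‖x‖ ≥ L`. At a far point choose a shortest local period,
and keep adding far points whose ball is not periodic under any period chosen so far. A newly
chosen period differs from all earlier ones (each earlier one fails at the new point), and all
periods lie in the finite set of vectors of norm at most `√(10CK)`, so the process stops, and it
stops only once every far ball is covered.
-/

section GreedyCover

variable {α β : Type*} (per : β → α → Prop) (Q : α → β → Prop)

def IsGreedyChain (l : List (α × β)) : Prop :=
  (∀ p ∈ l, Q p.1 p.2) ∧ l.Pairwise fun p q => ¬ per p.2 q.1

variable {per Q}

theorem IsGreedyChain.nodup_map_snd (hper : ∀ y v, Q y v → per v y) {l : List (α × β)}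
    (hl : IsGreedyChain per Q l) : (l.map Prod.snd).Nodup := by
  refine List.Pairwise.map Prod.snd (fun _ _ h => h) (hl.2.imp_of_mem ?_)
  rintro p q - hq hnot heq
  exact hnot (heq ▸ hper _ _ (hl.1 q hq))

theorem IsGreedyChain.length_le {S : Set β} (hS : S.Finite) (hQS : ∀ y v, Q y v → v ∈ S)
    (hper : ∀ y v, Q y v → per v y) {l : List (α × β)} (hl : IsGreedyChain per Q l) :
    l.length ≤ hS.toFinset.card := by
  have hsub : (l.map Prod.snd).toFinset ⊆ hS.toFinset := by
    intro v hv
    obtain ⟨p, hp, rfl⟩ := List.mem_map.mp (List.mem_toFinset.mp hv)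
    exact hS.mem_toFinset.mpr (hQS _ _ (hl.1 p hp))
  calc l.length = (l.map Prod.snd).toFinset.card := by
        rw [List.toFinset_card_of_nodup (hl.nodup_map_snd hper), List.length_map]
    _ ≤ hS.toFinset.card := Finset.card_le_card hsub

theorem IsGreedyChain.append {l : List (α × β)} (hl : IsGreedyChain per Q l) {y : α} {v : β}
    (hQ : Q y v) (hnew : ∀ p ∈ l, ¬ per p.2 y) : IsGreedyChain per Q (l ++ [(y, v)]) := by
  refine ⟨fun p hp => ?_, List.pairwise_append.mpr ⟨hl.2, List.pairwise_singleton _ _, ?_⟩⟩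
  · rcases List.mem_append.mp hp with hp | hp
    · exact hl.1 p hp
    · rwa [List.mem_singleton.mp hp]
  · rintro p hp q hq
    rw [List.mem_singleton.mp hq]
    exact hnew p hp

theorem exists_isGreedyChain_covering (far : Set α) {S : Set β} (hS : S.Finite)
    (hQS : ∀ y v, Q y v → v ∈ S) (hper : ∀ y v, Q y v → per v y)
    (hex : ∀ y ∈ far, ∃ v, Q y v) :
    ∃ l, IsGreedyChain per Q l ∧ ∀ y ∈ far, ∃ p ∈ l, per p.2 y := by
  by_contra! hstuck
  have hlong : ∀ n, ∃ l, IsGreedyChain per Q l ∧ l.length = n := by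
    intro n
    induction n with
    | zero => exact ⟨[], ⟨by simp, .nil⟩, rfl⟩
    | succ n ih =>
      obtain ⟨l, hl, rfl⟩ := ih
      obtain ⟨y, hy, hnew⟩ := hstuck l hl
      obtain ⟨v, hv⟩ := hex y hy
      exact ⟨_, hl.append hv hnew, by simp⟩
  obtain ⟨l, hl, hlen⟩ := hlong (hS.toFinset.card + 1)
  have := hl.length_le hS hQS hper
  omega

theorem exists_greedy_family (far : Set α) {S : Set β} (hS : S.Finite)
    (hQS : ∀ y v, Q y v → v ∈ S) (hper : ∀ y v, Q y v → per v y)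
    (hex : ∀ y ∈ far, ∃ v, Q y v) :
    ∃ (k : ℕ) (x : Fin k → α) (v : Fin k → β),
      (∀ y ∈ far, ∃ i, per (v i) y) ∧ (∀ i, Q (x i) (v i)) ∧
      (∀ i j, j < i → ¬ per (v j) (x i)) ∧ Function.Injective v := by
  obtain ⟨l, hl, hcover⟩ := exists_isGreedyChain_covering far hS hQS hper hex
  have hpair := List.pairwise_iff_get.mp hl.2
  have hQl : ∀ i, Q (l.get i).1 (l.get i).2 := fun i => hl.1 _ (l.get_mem i)
  refine ⟨l.length, fun i => (l.get i).1, fun i => (l.get i).2, fun y hy => ?_, hQl,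
    fun i j hji => hpair j i hji, fun i j hij => ?_⟩
  · obtain ⟨p, hp, hpy⟩ := hcover y hy
    obtain ⟨i, rfl⟩ := List.mem_iff_get.mp hp
    exact ⟨i, hpy⟩
  · replace hij : (l.get i).2 = (l.get j).2 := hij
    by_contra hne
    rcases lt_or_gt_of_ne hne with hlt | hlt
    · exact hpair i j hlt (hij ▸ hper _ _ (hQl j))
    · exact hpair j i hlt (hij ▸ hper _ _ (hQl i))

end GreedyCover

section LocalPeriods

variable {ι : Type} [Fintype ι]

theorem natAbs_le_supNorm (x : ι → ℤ) (i : ι) : (x i).natAbs ≤ supNorm x :=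
  Finset.le_sup (f := fun j => (x j).natAbs) (Finset.mem_univ i)

theorem finite_setOf_supNorm_le (r : ℝ) : {x : ι → ℤ | (supNorm x : ℝ) ≤ r}.Finite := by
  refine (Set.Finite.pi fun _ => Set.finite_Icc (-(⌊r⌋₊ : ℤ)) ⌊r⌋₊).subset fun x (hx : (supNorm x : ℝ) ≤ r) i _ => ?_
  have hxi := (natAbs_le_supNorm x i).trans (Nat.le_floor hx)
  simp only [Set.mem_Icc]
  omega

def IsShortestPeriodInside (M : Set (ι → ℤ)) (v : ι → ℤ) (X : Set (ι → ℤ)) : Prop :=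
  v ≠ 0 ∧ vPeriodicInside M v X ∧
    ∀ w : ι → ℤ, w ≠ 0 → supNorm w < supNorm v → ¬ vPeriodicInside M w X

theorem exists_isShortestPeriodInside {M : Set (ι → ℤ)} {X : Set (ι → ℤ)} {v : ι → ℤ}
    (hv : v ≠ 0) (hper : vPeriodicInside M v X) :
    ∃ u, IsShortestPeriodInside M u X ∧ supNorm u ≤ supNorm v := by
  obtain ⟨u, ⟨hu, hper_u⟩, hmin⟩ :=
    (measure (supNorm (ι := ι))).wf.has_min {w | w ≠ 0 ∧ vPeriodicInside M w X} ⟨v, hv, hper⟩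
  exact ⟨u, ⟨hu, hper_u, fun w hw hlt hper_w => hmin w ⟨hw, hper_w⟩ hlt⟩,
    not_lt.mp (hmin v ⟨hv, hper⟩)⟩

end LocalPeriods

theorem local_periods_family_general (M : Set (Fin 2 → ℤ)) (C : ℝ)
    (K L' : ℕ)
    (h1 : ∀ x : Fin 2 → ℤ, L' ≤ supNorm x → ∃ v : Fin 2 → ℤ, v ≠ 0 ∧
      (supNorm v : ℝ) ≤ Real.sqrt (10 * C * K) ∧ vPeriodicInside M v (ball x K))
    (L'' : ℕ)
    (L : ℕ) (hL : 2 * K + L'' + L' ≤ L) :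
    ∃ (k : ℕ) (x v : Fin k → (Fin 2 → ℤ)),
      (∀ y : Fin 2 → ℤ, L ≤ supNorm y →
        ∃ i, vPeriodicInside M (v i) (ball y K)) ∧
      (∀ i, (supNorm (v i) : ℝ) ≤ Real.sqrt (10 * C * K)) ∧
      ((∀ i, v i ≠ 0) ∧ Function.Injective v) ∧
      (∀ i, L ≤ supNorm (x i)) ∧
      (∀ i, vPeriodicInside M (v i) (ball (x i) K) ∧
        ∀ w : Fin 2 → ℤ, w ≠ 0 → supNorm w < supNorm (v i) →
          ¬ vPeriodicInside M w (ball (x i) K)) ∧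
      (∀ i j, j < i → ¬ vPeriodicInside M (v j) (ball (x i) K)) := by
  have hshortest : ∀ y ∈ {y : Fin 2 → ℤ | L ≤ supNorm y}, ∃ v : Fin 2 → ℤ,
      L ≤ supNorm y ∧ (supNorm v : ℝ) ≤ Real.sqrt (10 * C * K) ∧
        IsShortestPeriodInside M v (ball y K) := by
    intro y hy
    obtain ⟨v, hv, hvr, hper⟩ := h1 y ((by omega : L' ≤ L).trans hy)
    obtain ⟨u, hu, huv⟩ := exists_isShortestPeriodInside hv hper
    exact ⟨u, hy, (Nat.cast_le.mpr huv).trans hvr, hu⟩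
  obtain ⟨k, x, v, hcover, hQ, hnew, hinj⟩ :=
    exists_greedy_family (per := fun v y => vPeriodicInside M v (ball y K)) _
      (finite_setOf_supNorm_le (Real.sqrt (10 * C * K))) (fun _ _ h => h.2.1)
      (fun _ _ h => h.2.2.2.1) hshortest
  exact ⟨k, x, v, hcover, fun i => (hQ i).2.1, ⟨fun i => (hQ i).2.2.1, hinj⟩,
    fun i => (hQ i).1, fun i => (hQ i).2.2.2, hnew⟩

/-- Technical lemma producing an ordered family of local periods `v_1,…,v_k`
and witnesses `x_1,…,x_k` from property (P). -/
theorem local_periods_family (M : Set (Fin 2 → ℤ)) (C : ℝ) (hC : 0 < C)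
    (hR : ∀ n : ℕ, 1 ≤ n → (recBlockCount M n : ℝ) ≤ C * (n : ℝ))
    (K L' : ℕ) (hK : 0 < K) (hL' : 0 < L')
    (h1 : ∀ x : Fin 2 → ℤ, L' ≤ supNorm x → ∃ v : Fin 2 → ℤ, v ≠ 0 ∧
      (supNorm v : ℝ) ≤ Real.sqrt (10 * C * K) ∧ vPeriodicInside M v (ball x K))
    (h2 : Real.sqrt (10 * C * K) ≤ (K : ℝ))
    (h3 : 8 * (Real.log K) ^ 3 + 3 * C * K / Real.log K < (K : ℝ))
    (L'' : ℕ)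
    (hL'' : ∀ x : Fin 2 → ℤ, L'' ≤ supNorm x →
      IsRecurrentBlock M (3 * K) (blockOf M x (3 * K)))
    (L : ℕ) (hL : 2 * K + L'' + L' ≤ L) :
    ∃ (k : ℕ) (x v : Fin k → (Fin 2 → ℤ)),
      (∀ y : Fin 2 → ℤ, L ≤ supNorm y →
        ∃ i, vPeriodicInside M (v i) (ball y K)) ∧
      (∀ i, (supNorm (v i) : ℝ) ≤ Real.sqrt (10 * C * K)) ∧
      ((∀ i, v i ≠ 0) ∧ Function.Injective v) ∧
      (∀ i, L ≤ supNorm (x i)) ∧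
      (∀ i, vPeriodicInside M (v i) (ball (x i) K) ∧
        ∀ w : Fin 2 → ℤ, w ≠ 0 → supNorm w < supNorm (v i) →
          ¬ vPeriodicInside M w (ball (x i) K)) ∧
      (∀ i j, j < i → ¬ vPeriodicInside M (v j) (ball (x i) K)) :=
  local_periods_family_general M C K L' h1 L'' L hL
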